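/- Let R be a left head variable free ATRS. If s →_R t then s↓_U →⁺_{R_η↓ ∪ U(R)} t↓_U, i.e., a single R-step between applicative terms can be simulated by at least one step of the uncurried system on the U-normal forms. -/

import Mathlib

/-- First-order terms over a signature `F` with arity function `ar` and variables `V`. -/
inductive Term (F : Type) (ar : F → ℕ) (V : Type) : Type where
  | var : V → Term F ar V
  | app : (f : F) → (Fin (ar f) → Term F ar V) → Term F ar V

namespace Term

variable {F V : Type} {ar : F → ℕ}

/-- Application of a substitution. -/
def subst (σ : V → Term F ar V) : Term F ar V → Term F ar V
  | .var x => σ x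
  | .app f ts => .app f (fun i => (ts i).subst σ)

/-- Size of a term. -/
def size : Term F ar V → ℕ
  | .var _ => 1
  | .app _ ts => 1 + ∑ i, (ts i).size

end Term

section Rewriting

variable {F V : Type} {ar : F → ℕ}

/-- The (reflexive) subterm relation: `Subterm u t` means `u` occurs in `t`. -/
inductive Subterm : Term F ar V → Term F ar V → Prop where
  | refl (t) : Subterm t t
  | app (f) (ts : Fin (ar f) → Term F ar V) (i) (u) :
      Subterm u (ts i) → Subterm u (.app f ts)

/-- Proper subterm: `PSub u t` means `u` is a proper subterm of `t`. -/
def PSub (u t : Term F ar V) : Prop :=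
  ∃ (f : F) (ts : Fin (ar f) → Term F ar V) (i : Fin (ar f)),
    t = Term.app f ts ∧ Subterm u (ts i)

/-- One-step rewrite relation of a TRS `R`: closure of the rules under
contexts and substitutions. -/
inductive Rew (R : Set (Term F ar V × Term F ar V)) : Term F ar V → Term F ar V → Prop where
  | rule (l r : Term F ar V) (σ : V → Term F ar V) :
      (l, r) ∈ R → Rew R (l.subst σ) (r.subst σ)
  | congr (f : F) (ts : Fin (ar f) → Term F ar V) (i : Fin (ar f)) (u : Term F ar V) :
      Rew R (ts i) u → Rew R (.app f ts) (.app f (Function.update ts i u))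

/-- Many-step rewriting. -/
def RStar (R : Set (Term F ar V × Term F ar V)) : Term F ar V → Term F ar V → Prop :=
  Relation.ReflTransGen (Rew R)

/-- Normal forms. -/
def NF (R : Set (Term F ar V × Term F ar V)) (t : Term F ar V) : Prop := ∀ u, ¬ Rew R t u

/-- `t` rewrites to the normal form `u` (w.r.t. `R`). -/
def NormTo (R : Set (Term F ar V × Term F ar V)) (t u : Term F ar V) : Prop :=
  RStar R t u ∧ NF R u

/-- Termination: the rewrite relation is well-founded. -/
def Terminating (R : Set (Term F ar V × Term F ar V)) : Prop :=
  WellFounded (fun t s => Rew R s t)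

/-- Confluence. -/
def Confluent (R : Set (Term F ar V × Term F ar V)) : Prop :=
  ∀ s t u, RStar R s t → RStar R s u → ∃ v, RStar R t v ∧ RStar R u v

/-- Innermost one-step rewriting: the contracted redex has only normal
proper subterms. -/
inductive IRew (R : Set (Term F ar V × Term F ar V)) : Term F ar V → Term F ar V → Prop where
  | rule (l r : Term F ar V) (σ : V → Term F ar V) :
      (l, r) ∈ R → (∀ u, PSub u (l.subst σ) → NF R u) →
      IRew R (l.subst σ) (r.subst σ)
  | congr (f : F) (ts : Fin (ar f) → Term F ar V) (i : Fin (ar f)) (u : Term F ar V) :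
      IRew R (ts i) u → IRew R (.app f ts) (.app f (Function.update ts i u))

/-- Innermost termination. -/
def ITerminating (R : Set (Term F ar V × Term F ar V)) : Prop :=
  WellFounded (fun t s => IRew R s t)

/-- `m`-fold composition of a relation. -/
def RelPow (r : α → α → Prop) : ℕ → α → α → Prop
  | 0 => Eq
  | n + 1 => fun a c => ∃ b, r a b ∧ RelPow r n b c

/-- Derivation height of `t` w.r.t. a relation. -/
noncomputable def dh (r : α → α → Prop) (t : α) : ℕ :=
  sSup { m | ∃ u, RelPow r m t u }

/-- Derivational complexity w.r.t. a relation, restricted to starting terms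
satisfying `P`. -/
noncomputable def dcOn {F V : Type} {ar : F → ℕ}
    (r : Term F ar V → Term F ar V → Prop) (P : Term F ar V → Prop) (n : ℕ) : ℕ :=
  sSup { m | ∃ t, P t ∧ t.size ≤ n ∧ m = dh r t }

/-- `f ∈ O(g)`. -/
def BigO (f g : ℕ → ℕ) : Prop := ∃ M N : ℕ, ∀ n, f n ≤ M * g n + N

end Rewriting
section ATRS

/-- Signature for (un)curried applicative systems: `none` is the binary
application symbol `∘`, and `some (c, i)` is the symbol `c_i` of arity `i`
(with `c_0 = c` an applicative constant). -/
abbrev USig (C : Type) := Option (C × ℕ)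

/-- Arity function for `USig`. -/
def uar {C : Type} : USig C → ℕ
  | none => 2
  | some (_, i) => i

/-- Terms over the signature `USig C` (variables are natural numbers). -/
abbrev ATerm (C : Type) := Term (USig C) uar ℕ

variable {C : Type}

/-- Binary application `s ∘ t`. -/
def appT (s t : ATerm C) : ATerm C :=
  .app none (fun i => if i.1 = 0 then s else t)

/-- The applicative constant `c` (i.e. `c_0`). -/
def constT (c : C) : ATerm C :=
  .app (some (c, 0)) (fun i => (Nat.not_lt_zero _ i.isLt).elim)

/-- Symbols of a purely applicative term: only `∘` and constants `c_0`. -/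
def ApplicativeSym : USig C → Prop
  | none => True
  | some (_, i) => i = 0

/-- A term over the applicative signature (constants plus `∘`). -/
def ApplicativeT (t : ATerm C) : Prop :=
  ∀ (u : ATerm C) (f : USig C) (ts : Fin (uar f) → ATerm C),
    Subterm u t → u = Term.app f ts → ApplicativeSym f

/-- `headCount t = some (c, n)` iff `t = c ∘ t₁ ∘ ⋯ ∘ tₙ` for some terms `tᵢ`. -/
def headCount : ATerm C → Option (C × ℕ)
  | .var _ => none
  | .app none ts => (headCount (ts ⟨0, by simp [uar]⟩)).map (fun p => (p.1, p.2 + 1))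
  | .app (some (_, _ + 1)) _ => none
  | .app (some (c, 0)) _ => some (c, 0)

/-- The spine `c ∘ t₁ ∘ ⋯ ∘ tₙ` occurs as a subterm of a left- or
right-hand side of `R`. -/
def SpineIn (R : Set (ATerm C × ATerm C)) (c : C) (n : ℕ) : Prop :=
  ∃ p ∈ R, ∃ t : ATerm C, (Subterm t p.1 ∨ Subterm t p.2) ∧ headCount t = some (c, n)

/-- `aa` is the applicative-arity function of `R`: `aa c` is the maximal `n`
such that `c ∘ t₁ ∘ ⋯ ∘ tₙ` occurs in a rule of `R` (and `0` if `c` does not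
occur applied). -/
def AASpec (R : Set (ATerm C × ATerm C)) (aa : C → ℕ) : Prop :=
  ∀ c : C, (∀ n, SpineIn R c n → n ≤ aa c) ∧ (aa c = 0 ∨ SpineIn R c (aa c))

/-- A term is head variable free if no subterm is of the form `x ∘ v` with
`x` a variable. -/
def HeadVarFree (t : ATerm C) : Prop :=
  ∀ u : ATerm C, Subterm u t → ∀ (x : ℕ) (v : ATerm C), u ≠ appT (.var x) v

/-- Basic well-formedness of an applicative TRS: left-hand sides are not
variables, right-hand side variables occur on the left, and both sides are
applicative terms. -/
def IsATRS (R : Set (ATerm C × ATerm C)) : Prop :=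
  ∀ p ∈ R, (∀ x : ℕ, p.1 ≠ Term.var x) ∧
    (∀ x : ℕ, Subterm (.var x) p.2 → Subterm (.var x) p.1) ∧
    ApplicativeT p.1 ∧ ApplicativeT p.2

/-- `R` is left head variable free. -/
def LHVF (R : Set (ATerm C × ATerm C)) : Prop := ∀ p ∈ R, HeadVarFree p.1

/-- The variables `x_0, …, x_{i-1}`. -/
def uvars (i : ℕ) : Fin i → ATerm C := fun j => .var j.1

/-- The term `f_i(x_0,…,x_{i-1})`. -/
def fiT (c : C) (i : ℕ) : ATerm C := .app (some (c, i)) (fun j => .var j.1)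

/-- The uncurrying system `U`, with rules
`c_i(x_1,…,x_i) ∘ y → c_{i+1}(x_1,…,x_i,y)` for all `0 ≤ i < aa c`. -/
def USys (aa : C → ℕ) : Set (ATerm C × ATerm C) :=
  { p | ∃ (c : C) (i : ℕ), i < aa c ∧
      p = (appT (fiT c i) (.var i), fiT c (i + 1)) }

/-- The currying system `C(F)` (for a signature with arities `arF`), with
rules `f_{i+1}(x_1,…,x_i,y) → f_i(x_1,…,x_i) ∘ y` for all `0 ≤ i < arF f`
(where `f_{arF f}` plays the role of `f`). -/
def CurrySys {F : Type} (arF : F → ℕ) : Set (ATerm F × ATerm F) :=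
  { p | ∃ (f : F) (i : ℕ), i < arF f ∧
      p = (fiT f (i + 1), appT (fiT f i) (.var i)) }

/-- The η-saturation `R_η` of `R` (w.r.t. applicative arities `aa`). -/
inductive Eta (aa : C → ℕ) (R : Set (ATerm C × ATerm C)) : ATerm C × ATerm C → Prop where
  | base (p) : p ∈ R → Eta aa R p
  | eta (l r : ATerm C) (c : C) (n x : ℕ) :
      Eta aa R (l, r) → headCount l = some (c, n) → n < aa c →
      ¬ Subterm (.var x) l → ¬ Subterm (.var x) r →
      Eta aa R (appT l (.var x), appT r (.var x))

/-- The uncurried system `R_η↓`: the rules of `R_η` with both sides in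
`U`-normal form. -/
def EtaDown (aa : C → ℕ) (R : Set (ATerm C × ATerm C)) : Set (ATerm C × ATerm C) :=
  { p | ∃ l r : ATerm C, Eta aa R (l, r) ∧
      NormTo (USys aa) l p.1 ∧ NormTo (USys aa) r p.2 }

/-- The transformed system `U↓(R) = R_η↓ ∪ U(R)`. -/
def UD (aa : C → ℕ) (R : Set (ATerm C × ATerm C)) : Set (ATerm C × ATerm C) :=
  EtaDown aa R ∪ USys aa

/-- Symbols of the signature of `U↓(R)`: `∘` and `c_i` with `i ≤ aa c`. -/
def GoodSym (aa : C → ℕ) : USig C → Prop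
  | none => True
  | some (c, i) => i ≤ aa c

/-- A term over the signature of `U↓(R)`. -/
def GoodTerm (aa : C → ℕ) (t : ATerm C) : Prop :=
  ∀ (u : ATerm C) (f : USig C) (ts : Fin (uar f) → ATerm C),
    Subterm u t → u = Term.app f ts → GoodSym aa f

/-- `C'`: curry a term over the signature of `U↓(R)` and identify all
symbols `c_i` originating from the same constant `c`. -/
def curryId : ATerm C → ATerm C
  | .var x => .var x
  | .app none ts => appT (curryId (ts ⟨0, by simp [uar]⟩)) (curryId (ts ⟨1, by simp [uar]⟩))
  | .app (some (c, i)) ts =>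
      (List.ofFn (fun j : Fin (uar (some (c, i))) => curryId (ts j))).foldl appT (constT c)

end ATRS

/-!
`t↓_U` is computed structurally by `uncurry`: at every application `a ∘ b` the normalised head
`c_i(…)` of `a` absorbs `b` as long as `i < aa c`. `U`-steps do not change `uncurry`, and its
values are `U`-normal, so `s↓_U = uncurry s` for every normal form `s↓_U` of `s`.

An `R`-step is simulated in the context of extra arguments `bs`, i.e. we show
`(s ∘ bs)↓_U →⁺ (t ∘ bs)↓_U` by induction on the step, because a contractum may absorb the
arguments applied to it. A step inside an argument stays a step strictly below the root of the
normal form, whatever is absorbed afterwards. For a root step `lσ → rσ`, `uncurry` commutes with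
`σ` as `l` is head variable free. If the head of `l↓_U` absorbs the first extra argument `b`, the
η-expanded rule `l ∘ x → r ∘ x` of `R_η` takes over with `x := b`; otherwise `(lσ ∘ bs)↓_U` is
`l↓_U σ↓ ∘ bs↓`, which the rule `l↓_U → r↓_U` of `R_η↓` rewrites to a term whose `U`-normal form
is `(rσ ∘ bs)↓_U`.
-/

namespace Term

variable {F V : Type} {ar : F → ℕ}

theorem subst_subst (t : Term F ar V) (σ τ : V → Term F ar V) :
    (t.subst σ).subst τ = t.subst fun x => (σ x).subst τ := by
  induction t with
  | var x => rfl
  | app f ts ih => exact congrArg (Term.app f) (funext ih)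

theorem subst_congr {t : Term F ar V} {σ τ : V → Term F ar V}
    (h : ∀ x, Subterm (.var x) t → σ x = τ x) : t.subst σ = t.subst τ := by
  induction t with
  | var x => exact h x (.refl _)
  | app f ts ih =>
    exact congrArg (Term.app f) (funext fun i => ih i fun x hx => h x (.app f ts i _ hx))

theorem subst_update_of_not_subterm [DecidableEq V] {t : Term F ar V} {x : V}
    (hx : ¬ Subterm (.var x) t) (σ : V → Term F ar V) (b : Term F ar V) :
    t.subst (Function.update σ x b) = t.subst σ :=
  subst_congr fun _ hy => Function.update_of_ne (by rintro rfl; exact hx hy) _ _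

def maxVar : Term F ar ℕ → ℕ
  | .var x => x
  | .app _ ts => Finset.univ.sup fun i => maxVar (ts i)

theorem le_maxVar {x : ℕ} {t : Term F ar ℕ} (h : Subterm (.var x) t) : x ≤ t.maxVar := by
  induction t with
  | var y => cases h; exact le_rfl
  | app f ts ih =>
    cases h with
    | app _ _ i _ h => exact (ih i h).trans (Finset.le_sup (f := fun i => (ts i).maxVar) (by simp))

theorem exists_fresh_var (s t : Term F ar ℕ) :
    ∃ x, ¬ Subterm (.var x) s ∧ ¬ Subterm (.var x) t :=
  ⟨max s.maxVar t.maxVar + 1, fun h => by have := le_maxVar h; omega,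
    fun h => by have := le_maxVar h; omega⟩

end Term

section Rewriting

variable {F V : Type} {ar : F → ℕ} {Q Q' : Set (Term F ar V × Term F ar V)}

theorem Subterm.eq_of_var {u : Term F ar V} {x : V} (h : Subterm u (.var x)) : u = .var x := by
  cases h; rfl

theorem Rew.mono (hQ : Q ⊆ Q') {s t : Term F ar V} (h : Rew Q s t) : Rew Q' s t := by
  induction h with
  | rule l r σ hlr => exact .rule l r σ (hQ hlr)
  | congr f ts i u _ ih => exact .congr f ts i u ih

theorem RStar.mono (hQ : Q ⊆ Q') {s t : Term F ar V} (h : RStar Q s t) : RStar Q' s t :=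
  Relation.ReflTransGen.mono (fun _ _ => Rew.mono hQ) _ _ h

theorem Rew.subst {s t : Term F ar V} (h : Rew Q s t) (τ : V → Term F ar V) :
    Rew Q (s.subst τ) (t.subst τ) := by
  induction h with
  | rule l r σ hlr =>
    rw [Term.subst_subst, Term.subst_subst]
    exact .rule l r _ hlr
  | congr f ts i u _ ih =>
    have hupd : (fun j => (Function.update ts i u j).subst τ)
        = Function.update (fun j => (ts j).subst τ) i (u.subst τ) :=
      funext (Function.apply_update (fun _ t => t.subst τ) ts i u)
    change Rew Q (.app f _) (.app f fun j => (Function.update ts i u j).subst τ)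
    rw [hupd]
    exact .congr f _ i _ ih

theorem RStar.subst {s t : Term F ar V} (h : RStar Q s t) (τ : V → Term F ar V) :
    RStar Q (s.subst τ) (t.subst τ) :=
  Relation.ReflTransGen.lift _ (fun _ _ hst => Rew.subst hst τ) _ _ h

inductive BelowRootRew (Q : Set (Term F ar V × Term F ar V)) : Term F ar V → Term F ar V → Prop
  | congr (f : F) (ts : Fin (ar f) → Term F ar V) (i : Fin (ar f)) (u : Term F ar V) :
      Rew Q (ts i) u → BelowRootRew Q (.app f ts) (.app f (Function.update ts i u))

theorem BelowRootRew.rew {s t : Term F ar V} (h : BelowRootRew Q s t) : Rew Q s t := by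
  cases h with
  | congr f ts i u h => exact .congr f ts i u h

theorem BelowRootRew.update {f : F} (ts : Fin (ar f) → Term F ar V) (i : Fin (ar f))
    {u v : Term F ar V} (h : Rew Q u v) :
    BelowRootRew Q (.app f (Function.update ts i u)) (.app f (Function.update ts i v)) := by
  simpa using BelowRootRew.congr f (Function.update ts i u) i v (by simpa using h)

theorem RStar.app (f : F) {ds es : Fin (ar f) → Term F ar V} (h : ∀ i, RStar Q (ds i) (es i)) :
    RStar Q (.app f ds) (.app f es) := by
  classical
  suffices key : ∀ s : Finset (Fin (ar f)),
      RStar Q (.app f ds) (.app f fun j => if j ∈ s then es j else ds j) by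
    simpa using key Finset.univ
  intro s
  induction s using Finset.induction_on with
  | empty =>
    simp only [Finset.notMem_empty, if_false]
    exact Relation.ReflTransGen.refl
  | insert a s ha ih =>
    set g : Fin (ar f) → Term F ar V := fun j => if j ∈ s then es j else ds j
    have hstep :
        RStar Q (.app f (Function.update g a (ds a))) (.app f (Function.update g a (es a))) :=
      Relation.ReflTransGen.lift (p := Rew Q) (fun x => Term.app f (Function.update g a x))
        (fun _ _ huv => (BelowRootRew.update g a huv).rew) _ _ (h a)
    have hds : Function.update g a (ds a) = g := by simp [g, ha]
    have hes : Function.update g a (es a) = fun j => if j ∈ insert a s then es j else ds j := by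
      funext j
      by_cases hj : j = a <;> simp [g, hj]
    rw [hds, hes] at hstep
    exact ih.trans hstep

theorem rstar_subst_of_forall {σ τ : V → Term F ar V} (h : ∀ x, RStar Q (σ x) (τ x))
    (t : Term F ar V) : RStar Q (t.subst σ) (t.subst τ) := by
  induction t with
  | var x => exact h x
  | app f ts ih => exact RStar.app f ih

theorem NF.eq_of_rstar {s t : Term F ar V} (hs : NF Q s) (h : RStar Q s t) : s = t := by
  rcases Relation.ReflTransGen.cases_head h with rfl | ⟨u, hsu, -⟩
  · rfl
  · exact (hs u hsu).elim

theorem NF.arg {f : F} {ts : Fin (ar f) → Term F ar V} (h : NF Q (.app f ts)) (i : Fin (ar f)) :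
    NF Q (ts i) :=
  fun u hu => h _ (.congr f ts i u hu)

theorem NF.app {f : F} {ts : Fin (ar f) → Term F ar V}
    (hroot : ∀ l r σ, (l, r) ∈ Q → l.subst σ ≠ .app f ts) (hargs : ∀ i, NF Q (ts i)) :
    NF Q (.app f ts) := by
  intro u hu
  generalize hs : Term.app f ts = s at hu
  cases hu with
  | rule l r σ hlr => exact hroot l r σ hlr hs.symm
  | congr g us i v hv =>
    cases hs
    exact hargs i v hv

theorem NF.var (hQ : ∀ p ∈ Q, ∀ y, p.1 ≠ .var y) (x : V) : NF Q (.var x) := by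
  intro u hu
  generalize hs : Term.var x = s at hu
  cases hu with
  | rule l r σ hlr =>
    cases l with
    | var y => exact hQ _ hlr y rfl
    | app f ts => cases hs
  | congr => cases hs

end Rewriting

section Applicative

variable {C : Type} {Q : Set (ATerm C × ATerm C)}

theorem appT_subst (a b : ATerm C) (σ : ℕ → ATerm C) :
    (appT a b).subst σ = appT (a.subst σ) (b.subst σ) := by
  simp only [appT, Term.subst]
  congr 1
  funext k
  split_ifs <;> rfl

theorem app_none_eq_appT (ts : Fin (uar (none : USig C)) → ATerm C) :
    Term.app none ts = appT (ts ⟨0, Nat.zero_lt_two⟩) (ts ⟨1, Nat.one_lt_two⟩) := by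
  unfold appT
  congr 1
  funext ⟨k, hk⟩
  match k, hk with
  | 0, _ => rfl
  | 1, _ => rfl
  | k + 2, hk => exact absurd hk (by simp [uar])

theorem appT_inj {a b a' b' : ATerm C} : appT a b = appT a' b' ↔ a = a' ∧ b = b' := by
  refine ⟨fun h => ?_, fun ⟨ha, hb⟩ => ha ▸ hb ▸ rfl⟩
  simp only [appT, Term.app.injEq, heq_eq_eq, true_and] at h
  exact ⟨congrFun h ⟨0, Nat.zero_lt_two⟩, congrFun h ⟨1, Nat.one_lt_two⟩⟩

theorem appT_ne_var (a b : ATerm C) (x : ℕ) : appT a b ≠ .var x := nofun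

theorem Subterm.of_appT {u a b : ATerm C} (h : Subterm u (appT a b)) :
    u = appT a b ∨ Subterm u a ∨ Subterm u b := by
  cases h with
  | refl => exact .inl rfl
  | app _ _ i _ h =>
    match i with
    | ⟨0, _⟩ => exact .inr (.inl h)
    | ⟨1, _⟩ => exact .inr (.inr h)

theorem BelowRootRew.appT_left {a a' : ATerm C} (b : ATerm C) (h : Rew Q a a') :
    BelowRootRew Q (appT a b) (appT a' b) := by
  simpa [app_none_eq_appT, Function.update_apply, Fin.ext_iff] using
    BelowRootRew.congr none (fun k => if k.1 = 0 then a else b) ⟨0, Nat.zero_lt_two⟩ a' h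

theorem BelowRootRew.appT_right (a : ATerm C) {b b' : ATerm C} (h : Rew Q b b') :
    BelowRootRew Q (appT a b) (appT a b') := by
  simpa [app_none_eq_appT, Function.update_apply, Fin.ext_iff] using
    BelowRootRew.congr none (fun k => if k.1 = 0 then a else b) ⟨1, Nat.one_lt_two⟩ b' h

theorem HeadVarFree.arg {f : USig C} {ts : Fin (uar f) → ATerm C} (h : HeadVarFree (.app f ts))
    (i : Fin (uar f)) : HeadVarFree (ts i) :=
  fun u hu => h u (.app f ts i u hu)

theorem HeadVarFree.fun_ne_var {ts : Fin (uar (none : USig C)) → ATerm C}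
    (h : HeadVarFree (.app none ts)) (x : ℕ) : ts ⟨0, Nat.zero_lt_two⟩ ≠ .var x := fun hx =>
  h _ (.refl _) x (ts ⟨1, Nat.one_lt_two⟩) (by rw [app_none_eq_appT, hx])

theorem HeadVarFree.appT {a b : ATerm C} (ha : HeadVarFree a) (hb : HeadVarFree b)
    (hne : ∀ x, a ≠ .var x) : HeadVarFree (appT a b) := by
  intro u hu y v huv
  rcases Subterm.of_appT hu with rfl | hu | hu
  · exact hne y (appT_inj.mp huv).1
  · exact ha u hu y v huv
  · exact hb u hu y v huv

theorem headVarFree_var (x : ℕ) : HeadVarFree (.var x : ATerm C) := by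
  intro u hu y v huv
  rw [hu.eq_of_var] at huv
  exact appT_ne_var _ _ _ huv.symm

theorem ApplicativeT.arg {f : USig C} {ts : Fin (uar f) → ATerm C} (h : ApplicativeT (.app f ts))
    (i : Fin (uar f)) : ApplicativeT (ts i) :=
  fun u g us hu => h u g us (.app f ts i u hu)

theorem ApplicativeT.appT {a b : ATerm C} (ha : ApplicativeT a) (hb : ApplicativeT b) :
    ApplicativeT (appT a b) := by
  intro u f ts hu hut
  rcases Subterm.of_appT hu with rfl | hu | hu
  · cases hut
    trivial
  · exact ha u f ts hu hut
  · exact hb u f ts hu hut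

theorem applicativeT_var (x : ℕ) : ApplicativeT (.var x : ATerm C) := by
  intro u f ts hu hut
  rw [hu.eq_of_var] at hut
  cases hut

end Applicative

section Uncurrying

variable {C : Type} (aa : C → ℕ)

/-- `a ∘ b` is a `U`-redex, whatever `b` is. -/
def AbsorbsArg : ATerm C → Prop
  | .app (some (c, i)) _ => i < aa c
  | _ => False

/-- `(a ∘ b)↓_U` for `U`-normal `a` and `b`. -/
def uncurryApp : ATerm C → ATerm C → ATerm C
  | .app (some (c, i)) us, b =>
    if i < aa c then .app (some (c, i + 1)) (Fin.snoc (α := fun _ => ATerm C) us b)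
    else appT (.app (some (c, i)) us) b
  | a, b => appT a b

/-- The `U`-normal form `t↓_U`. -/
def uncurry : ATerm C → ATerm C
  | .var x => .var x
  | .app none ts =>
    uncurryApp aa (uncurry (ts ⟨0, Nat.zero_lt_two⟩)) (uncurry (ts ⟨1, Nat.one_lt_two⟩))
  | .app (some fi) ts => .app (some fi) fun i => uncurry (ts i)

def appTs (u : ATerm C) (bs : List (ATerm C)) : ATerm C := bs.foldl appT u

@[simp] theorem appTs_nil (u : ATerm C) : appTs u [] = u := rfl

@[simp] theorem appTs_cons (u b : ATerm C) (bs : List (ATerm C)) :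
    appTs u (b :: bs) = appTs (appT u b) bs := rfl

variable {aa}

theorem absorbsArg_cases (a : ATerm C) :
    (∃ c i, ∃ us : Fin i → ATerm C, a = .app (some (c, i)) us ∧ i < aa c) ∨ ¬ AbsorbsArg aa a := by
  match a with
  | .var _ => exact .inr nofun
  | .app none _ => exact .inr nofun
  | .app (some (c, i)) us =>
    by_cases hi : i < aa c
    · exact .inl ⟨c, i, us, rfl, hi⟩
    · exact .inr hi

theorem uncurryApp_of_lt {c : C} {i : ℕ} (hi : i < aa c) (us : Fin i → ATerm C) (b : ATerm C) :
    uncurryApp aa (.app (some (c, i)) us) b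
      = .app (some (c, i + 1)) (Fin.snoc (α := fun _ => ATerm C) us b) :=
  if_pos hi

theorem uncurryApp_of_not_absorbsArg {a : ATerm C} (ha : ¬ AbsorbsArg aa a) (b : ATerm C) :
    uncurryApp aa a b = appT a b := by
  match a, ha with
  | .var _, _ => rfl
  | .app none _, _ => rfl
  | .app (some _) _, ha => exact if_neg ha

theorem uncurry_appT (a b : ATerm C) :
    uncurry aa (appT a b) = uncurryApp aa (uncurry aa a) (uncurry aa b) := rfl

theorem uncurry_app_congr {f : USig C} {ts ts' : Fin (uar f) → ATerm C}
    (h : ∀ i, uncurry aa (ts i) = uncurry aa (ts' i)) :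
    uncurry aa (.app f ts) = uncurry aa (.app f ts') := by
  rcases f with _ | fi <;> simp only [uncurry, h]

theorem uncurry_appTs (u : ATerm C) (bs : List (ATerm C)) :
    uncurry aa (appTs u bs) = (bs.map (uncurry aa)).foldl (uncurryApp aa) (uncurry aa u) := by
  induction bs generalizing u with
  | nil => rfl
  | cons b bs ih => exact ih (appT u b)

theorem foldl_uncurryApp_of_not_absorbsArg {a : ATerm C} (ha : ¬ AbsorbsArg aa a)
    (bs : List (ATerm C)) : bs.foldl (uncurryApp aa) a = appTs a bs := by
  induction bs generalizing a with
  | nil => rfl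
  | cons b bs ih =>
    rw [List.foldl_cons, uncurryApp_of_not_absorbsArg ha]
    exact ih nofun

theorem usys_step {c : C} {i : ℕ} (hi : i < aa c) (us : Fin i → ATerm C) (b : ATerm C) :
    Rew (USys aa) (appT (.app (some (c, i)) us) b)
      (.app (some (c, i + 1)) (Fin.snoc (α := fun _ => ATerm C) us b)) := by
  have := Rew.rule _ _ (fun m => if h : m < i then us ⟨m, h⟩ else b)
    (show (appT (fiT c i) (.var i), fiT c (i + 1)) ∈ USys aa from ⟨c, i, hi, rfl⟩)
  convert this using 1
  · rw [appT_subst]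
    change _ = appT (.app (some (c, i)) fun j : Fin i => if h : (j : ℕ) < i then us ⟨j, h⟩ else b)
      (if h : i < i then us ⟨i, h⟩ else b)
    simp
  · simp only [fiT, Term.subst]
    congr 1

theorem rstar_appT_uncurryApp (a b : ATerm C) :
    RStar (USys aa) (appT a b) (uncurryApp aa a b) := by
  rcases absorbsArg_cases a with ⟨c, i, us, rfl, hi⟩ | ha
  · rw [uncurryApp_of_lt hi]
    exact .single (usys_step hi us b)
  · rw [uncurryApp_of_not_absorbsArg ha]
    exact .refl

theorem rstar_uncurry (t : ATerm C) : RStar (USys aa) t (uncurry aa t) := by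
  induction t with
  | var x => exact .refl
  | app f ts ih =>
    rcases f with _ | fi
    · refine (RStar.app none ih).trans ?_
      rw [app_none_eq_appT]
      exact rstar_appT_uncurryApp _ _
    · exact RStar.app _ ih

theorem uncurry_eq_of_rew {s t : ATerm C} (h : Rew (USys aa) s t) :
    uncurry aa s = uncurry aa t := by
  induction h with
  | rule l r σ hlr =>
    obtain ⟨c, i, hi, ⟨⟩⟩ := hlr
    change uncurryApp aa (.app (some (c, i)) fun j : Fin i => uncurry aa (σ j)) (uncurry aa (σ i))
      = .app (some (c, i + 1)) fun j : Fin (i + 1) => uncurry aa (σ j)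
    rw [uncurryApp_of_lt hi]
    congr 1
    funext j
    refine Fin.lastCases ?_ (fun j => ?_) j <;> simp [Fin.snoc]
  | congr f ts i u _ ih =>
    refine uncurry_app_congr fun j => ?_
    rcases eq_or_ne j i with rfl | hj
    · simp [ih]
    · simp [hj]

theorem uncurry_eq_of_rstar {s t : ATerm C} (h : RStar (USys aa) s t) :
    uncurry aa s = uncurry aa t := by
  induction h with
  | refl => rfl
  | tail _ hst ih => exact ih.trans (uncurry_eq_of_rew hst)

end Uncurrying

section NormalForms

variable {C : Type} {aa : C → ℕ}

theorem usys_lhs_subst {l r : ATerm C} (hlr : (l, r) ∈ USys aa) (σ : ℕ → ATerm C) :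
    ∃ a b, l.subst σ = appT a b ∧ AbsorbsArg aa a := by
  obtain ⟨c, i, hi, ⟨⟩⟩ := hlr
  exact ⟨_, _, appT_subst _ _ σ, hi⟩

theorem nf_appT {a b : ATerm C} (ha : NF (USys aa) a) (hb : NF (USys aa) b)
    (hab : ¬ AbsorbsArg aa a) : NF (USys aa) (appT a b) := by
  refine NF.app (fun l r σ hlr he => ?_) fun k => ?_
  · obtain ⟨a', b', he', ha'⟩ := usys_lhs_subst hlr σ
    rw [he'] at he
    exact hab ((appT_inj.mp he).1 ▸ ha')
  · split_ifs
    exacts [ha, hb]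

theorem nf_app_some {fi : C × ℕ} {ts : Fin (uar (some fi)) → ATerm C}
    (h : ∀ j, NF (USys aa) (ts j)) : NF (USys aa) (.app (some fi) ts) := by
  refine NF.app (fun l r σ hlr he => ?_) h
  obtain ⟨a, b, he', -⟩ := usys_lhs_subst hlr σ
  rw [he'] at he
  cases he

theorem nf_uncurryApp {a b : ATerm C} (ha : NF (USys aa) a) (hb : NF (USys aa) b) :
    NF (USys aa) (uncurryApp aa a b) := by
  rcases absorbsArg_cases a with ⟨c, i, us, rfl, hi⟩ | hab
  · rw [uncurryApp_of_lt hi]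
    refine nf_app_some fun j => Fin.lastCases ?_ (fun j => ?_) j
    · simpa [Fin.snoc] using hb
    · simpa [Fin.snoc] using ha.arg j
  · rw [uncurryApp_of_not_absorbsArg hab]
    exact nf_appT ha hb hab

theorem nf_uncurry (t : ATerm C) : NF (USys aa) (uncurry aa t) := by
  induction t with
  | var x =>
    refine NF.var ?_ x
    rintro _ ⟨c, i, -, rfl⟩ y
    exact appT_ne_var _ _ y
  | app f ts ih =>
    rcases f with _ | fi
    · exact nf_uncurryApp (ih _) (ih _)
    · exact nf_app_some ih

theorem uncurry_eq_self_of_nf {t : ATerm C} (h : NF (USys aa) t) : uncurry aa t = t :=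
  (h.eq_of_rstar (rstar_uncurry t)).symm

theorem uncurry_uncurry (t : ATerm C) : uncurry aa (uncurry aa t) = uncurry aa t :=
  uncurry_eq_self_of_nf (nf_uncurry t)

theorem NormTo.eq_uncurry {s s' : ATerm C} (h : NormTo (USys aa) s s') : s' = uncurry aa s :=
  (uncurry_eq_self_of_nf h.2).symm.trans (uncurry_eq_of_rstar h.1).symm

end NormalForms

section Substitution

variable {C : Type} {aa : C → ℕ}

theorem absorbsArg_app_congr {f : USig C} (ts ts' : Fin (uar f) → ATerm C) :
    AbsorbsArg aa (.app f ts) ↔ AbsorbsArg aa (.app f ts') := by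
  rcases f with _ | fi <;> exact Iff.rfl

theorem absorbsArg_subst_iff {a : ATerm C} (ha : ∀ x, a ≠ .var x) (τ : ℕ → ATerm C) :
    AbsorbsArg aa (a.subst τ) ↔ AbsorbsArg aa a := by
  match a with
  | .var y => exact absurd rfl (ha y)
  | .app _ _ => exact absorbsArg_app_congr _ _

theorem uncurryApp_ne_var (a b : ATerm C) (x : ℕ) : uncurryApp aa a b ≠ .var x := by
  rcases absorbsArg_cases a with ⟨c, i, us, rfl, hi⟩ | ha
  · rw [uncurryApp_of_lt hi]
    nofun
  · rw [uncurryApp_of_not_absorbsArg ha]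
    exact appT_ne_var a b x

theorem uncurry_ne_var {t : ATerm C} (ht : ∀ x, t ≠ .var x) (x : ℕ) : uncurry aa t ≠ .var x := by
  match t with
  | .var y => exact absurd rfl (ht y)
  | .app none _ => exact uncurryApp_ne_var _ _ x
  | .app (some _) _ => nofun

theorem uncurryApp_subst {a : ATerm C} (ha : ∀ x, a ≠ .var x) (b : ATerm C) (τ : ℕ → ATerm C) :
    (uncurryApp aa a b).subst τ = uncurryApp aa (a.subst τ) (b.subst τ) := by
  rcases absorbsArg_cases a with ⟨c, i, us, rfl, hi⟩ | hab
  · change _ = uncurryApp aa (.app (some (c, i)) fun j : Fin i => (us j).subst τ) _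
    rw [uncurryApp_of_lt hi, uncurryApp_of_lt hi]
    exact congrArg (Term.app _) (Fin.comp_snoc (fun u : ATerm C => u.subst τ) us b)
  · have hab' : ¬ AbsorbsArg aa (a.subst τ) := by rwa [absorbsArg_subst_iff ha]
    rw [uncurryApp_of_not_absorbsArg hab, uncurryApp_of_not_absorbsArg hab', appT_subst]

theorem uncurry_subst {t : ATerm C} (ht : HeadVarFree t) (σ : ℕ → ATerm C) :
    uncurry aa (t.subst σ) = (uncurry aa t).subst fun x => uncurry aa (σ x) := by
  induction t with
  | var x => rfl
  | app f ts ih =>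
    have ih' := fun i => ih i (ht.arg i)
    rcases f with _ | fi
    · change uncurryApp aa (uncurry aa ((ts _).subst σ)) (uncurry aa ((ts _).subst σ)) = _
      rw [ih', ih', ← uncurryApp_subst (uncurry_ne_var ht.fun_ne_var)]
      rfl
    · exact congrArg (Term.app _) (funext ih')

theorem uncurryApp_eq_app_some {a b : ATerm C} {c : C} {i : ℕ}
    {us : Fin (uar (some (c, i))) → ATerm C} (h : uncurryApp aa a b = .app (some (c, i)) us) :
    ∃ j, ∃ vs : Fin j → ATerm C, i = j + 1 ∧ a = .app (some (c, j)) vs := by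
  rcases absorbsArg_cases a with ⟨c', j, vs, rfl, hj⟩ | hab
  · rw [uncurryApp_of_lt hj] at h
    cases h
    exact ⟨j, vs, rfl, rfl⟩
  · rw [uncurryApp_of_not_absorbsArg hab] at h
    cases h

theorem headCount_of_uncurry_eq {t : ATerm C} (ht : ApplicativeT t) {c : C} {i : ℕ}
    {us : Fin (uar (some (c, i))) → ATerm C} (h : uncurry aa t = .app (some (c, i)) us) :
    headCount t = some (c, i) := by
  induction t generalizing i with
  | var x => cases h
  | app f ts ih =>
    rcases f with _ | ⟨c₀, i₀⟩
    · obtain ⟨j, vs, rfl, hv⟩ := uncurryApp_eq_app_some h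
      change (headCount (ts _)).map _ = _
      rw [ih _ (ht.arg _) hv]
      rfl
    · obtain rfl : i₀ = 0 := ht _ _ _ (.refl _) rfl
      cases h
      rfl

end Substitution

section Simulation

variable {C : Type} {aa : C → ℕ} {R Q : Set (ATerm C × ATerm C)}

theorem Eta.fst_ne_var (hR : IsATRS R) {p : ATerm C × ATerm C} (h : Eta aa R p) (x : ℕ) :
    p.1 ≠ .var x := by
  cases h with
  | base p hp => exact (hR p hp).1 x
  | eta => exact appT_ne_var _ _ x

theorem Eta.applicativeT_fst (hR : IsATRS R) {p : ATerm C × ATerm C} (h : Eta aa R p) :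
    ApplicativeT p.1 := by
  induction h with
  | base p hp => exact (hR p hp).2.2.1
  | eta l r c n x _ _ _ _ _ ih => exact ih.appT (applicativeT_var x)

theorem Eta.headVarFree_fst (hR : IsATRS R) (hl : LHVF R) {p : ATerm C × ATerm C}
    (h : Eta aa R p) : HeadVarFree p.1 := by
  induction h with
  | base p hp => exact hl p hp
  | eta l r c n x hlr _ _ _ _ ih => exact ih.appT (headVarFree_var x) (hlr.fst_ne_var hR)

theorem Rew.appTs_left {u v : ATerm C} (h : Rew Q u v) (bs : List (ATerm C)) :
    Rew Q (appTs u bs) (appTs v bs) := by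
  induction bs generalizing u v with
  | nil => exact h
  | cons b bs ih => exact ih (BelowRootRew.appT_left b h).rew

theorem BelowRootRew.uncurryApp_left {a a' : ATerm C} (h : BelowRootRew Q a a') (b : ATerm C) :
    BelowRootRew Q (uncurryApp aa a b) (uncurryApp aa a' b) := by
  obtain ⟨f, ts, i, u, hu⟩ := h
  rcases absorbsArg_cases (.app f ts) with ⟨c, j, us, he, hj⟩ | hab
  · cases he
    rw [uncurryApp_of_lt hj]
    -- `erw`: the argument tuples are indexed by `Fin (uar (some (c, j)))`, which is `Fin j` only
    -- up to unfolding `uar`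
    erw [uncurryApp_of_lt hj, Fin.snoc_update]
    exact .congr _ _ _ _ (by erw [Fin.snoc_castSucc]; exact hu)
  · have hab' : ¬ AbsorbsArg aa (.app f (Function.update ts i u)) := by
      rwa [absorbsArg_app_congr _ ts]
    rw [uncurryApp_of_not_absorbsArg hab, uncurryApp_of_not_absorbsArg hab']
    exact .appT_left b (.congr f ts i u hu)

theorem BelowRootRew.uncurryApp_right (a : ATerm C) {b b' : ATerm C} (h : Rew Q b b') :
    BelowRootRew Q (uncurryApp aa a b) (uncurryApp aa a b') := by
  rcases absorbsArg_cases a with ⟨c, i, us, rfl, hi⟩ | hab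
  · rw [uncurryApp_of_lt hi, uncurryApp_of_lt hi,
      ← Fin.update_snoc_last (α := fun _ => ATerm C) b us b']
    exact .congr _ _ _ _ (by simpa using h)
  · rw [uncurryApp_of_not_absorbsArg hab, uncurryApp_of_not_absorbsArg hab]
    exact .appT_right a h

theorem BelowRootRew.foldl_uncurryApp {a a' : ATerm C} (h : BelowRootRew Q a a')
    (bs : List (ATerm C)) :
    BelowRootRew Q (bs.foldl (uncurryApp aa) a) (bs.foldl (uncurryApp aa) a') := by
  induction bs generalizing a a' with
  | nil => exact h
  | cons b bs ih => exact ih (h.uncurryApp_left b)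

theorem transGen_foldl_uncurryApp {H : ATerm C → ATerm C}
    (hH : ∀ {u v}, Rew Q u v → BelowRootRew Q (H u) (H v)) (bs : List (ATerm C)) {u v : ATerm C}
    (h : Relation.TransGen (Rew Q) u v) :
    Relation.TransGen (Rew Q) (bs.foldl (uncurryApp aa) (H u)) (bs.foldl (uncurryApp aa) (H v)) :=
  Relation.TransGen.lift (p := Rew Q) (fun w => bs.foldl (uncurryApp aa) (H w))
    (fun _ _ huv => ((hH huv).foldl_uncurryApp bs).rew) _ _ h

theorem Eta.transGen_uncurry_appTs_of_not_absorbsArg (hR : IsATRS R) (hl : LHVF R) {l r : ATerm C}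
    (hlr : Eta aa R (l, r)) (σ : ℕ → ATerm C) (bs : List (ATerm C))
    (hbs : ¬ AbsorbsArg aa (uncurry aa l) ∨ bs = []) :
    Relation.TransGen (Rew (UD aa R))
      (uncurry aa (appTs (l.subst σ) bs)) (uncurry aa (appTs (r.subst σ) bs)) := by
  set τ : ℕ → ATerm C := fun x => uncurry aa (σ x)
  have hlhs : uncurry aa (appTs (l.subst σ) bs)
      = appTs ((uncurry aa l).subst τ) (bs.map (uncurry aa)) := by
    rw [uncurry_appTs, uncurry_subst (hlr.headVarFree_fst hR hl)]
    rcases hbs with hab | rfl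
    · refine foldl_uncurryApp_of_not_absorbsArg ?_ _
      rwa [absorbsArg_subst_iff (uncurry_ne_var (hlr.fst_ne_var hR))]
    · rfl
  have hrhs : uncurry aa (appTs ((uncurry aa r).subst τ) (bs.map (uncurry aa)))
      = uncurry aa (appTs (r.subst σ) bs) := by
    have hr : RStar (USys aa) (r.subst σ) ((uncurry aa r).subst τ) :=
      ((rstar_uncurry r).subst σ).trans (rstar_subst_of_forall (fun x => rstar_uncurry (σ x)) _)
    rw [uncurry_appTs, uncurry_appTs, List.map_map, ← uncurry_eq_of_rstar hr]
    simp [Function.comp_def, uncurry_uncurry]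
  have hrule : (uncurry aa l, uncurry aa r) ∈ UD aa R :=
    .inl ⟨l, r, hlr, ⟨rstar_uncurry l, nf_uncurry l⟩, ⟨rstar_uncurry r, nf_uncurry r⟩⟩
  rw [hlhs, ← hrhs]
  exact .head' ((Rew.rule _ _ τ hrule).appTs_left _)
    ((rstar_uncurry _).mono Set.subset_union_right)

theorem Eta.transGen_uncurry_appTs (hR : IsATRS R) (hl : LHVF R) {l r : ATerm C}
    (hlr : Eta aa R (l, r)) (σ : ℕ → ATerm C) (bs : List (ATerm C)) :
    Relation.TransGen (Rew (UD aa R))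
      (uncurry aa (appTs (l.subst σ) bs)) (uncurry aa (appTs (r.subst σ) bs)) := by
  induction bs generalizing l r σ with
  | nil => exact hlr.transGen_uncurry_appTs_of_not_absorbsArg hR hl σ [] (.inr rfl)
  | cons b bs ih =>
    rcases absorbsArg_cases (uncurry aa l) with ⟨c, i, us, hul, hi⟩ | hab
    -- the head of `l↓` absorbs `b`: use the η-expansion `l ∘ x → r ∘ x` with `x := b`
    · obtain ⟨x, hxl, hxr⟩ := Term.exists_fresh_var l r
      have hexp := Eta.eta l r c i x hlr (headCount_of_uncurry_eq (hlr.applicativeT_fst hR) hul)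
        hi hxl hxr
      simpa only [appTs_cons, appT_subst, Term.subst_update_of_not_subterm hxl,
        Term.subst_update_of_not_subterm hxr, Term.subst, Function.update_self]
        using ih hexp (Function.update σ x b)
    · exact hlr.transGen_uncurry_appTs_of_not_absorbsArg hR hl σ _ (.inl hab)

theorem Rew.transGen_uncurry_appTs (hR : IsATRS R) (hl : LHVF R) {s t : ATerm C}
    (hst : Rew R s t) (bs : List (ATerm C)) :
    Relation.TransGen (Rew (UD aa R)) (uncurry aa (appTs s bs)) (uncurry aa (appTs t bs)) := by
  induction hst generalizing bs with
  | rule l r σ hlr => exact Eta.transGen_uncurry_appTs hR hl (.base _ hlr) σ bs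
  | congr f ts i u _ ih =>
    rcases f with _ | fi
    · rw [app_none_eq_appT ts, app_none_eq_appT (Function.update ts i u)]
      match i with
      | ⟨0, _⟩ =>
        simpa [Function.update_apply, Fin.ext_iff] using ih (ts ⟨1, Nat.one_lt_two⟩ :: bs)
      | ⟨1, _⟩ =>
        rw [uncurry_appTs, uncurry_appTs]
        simpa [Function.update_apply, Fin.ext_iff, uncurry_appT] using
          transGen_foldl_uncurryApp
            (BelowRootRew.uncurryApp_right (uncurry aa (ts ⟨0, Nat.zero_lt_two⟩)))
            (bs.map (uncurry aa)) (ih [])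
    · have hupd : uncurry aa (.app (some fi) (Function.update ts i u))
          = .app (some fi) (Function.update (fun j => uncurry aa (ts j)) i (uncurry aa u)) :=
        congrArg (Term.app _) (funext (Function.apply_update (fun _ => uncurry aa) ts i u))
      rw [uncurry_appTs, uncurry_appTs, hupd]
      have key := transGen_foldl_uncurryApp (aa := aa)
        (BelowRootRew.update (fun j => uncurry aa (ts j)) i) (bs.map (uncurry aa)) (ih [])
      rwa [appTs_nil, appTs_nil, Function.update_eq_self] at key

end Simulation

theorem uncurried_step_general {C : Type} (R : Set (ATerm C × ATerm C)) (aa : C → ℕ)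
    (hR : IsATRS R) (hl : LHVF R)
    (s t s' t' : ATerm C)
    (hst : Rew R s t)
    (hs : NormTo (USys aa) s s') (ht : NormTo (USys aa) t t') :
    Relation.TransGen (Rew (UD aa R)) s' t' := by
  rw [hs.eq_uncurry, ht.eq_uncurry]
  exact hst.transGen_uncurry_appTs hR hl []

/-- a single `R`-step between applicative terms is simulated by
at least one `U↓(R)`-step on the `U`-normal forms:
`s →_R t` implies `s↓_U →⁺_{U↓(R)} t↓_U`. -/
theorem uncurried_step {C : Type} (R : Set (ATerm C × ATerm C)) (aa : C → ℕ)
    (hR : IsATRS R) (hl : LHVF R) (haa : AASpec R aa)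
    (s t s' t' : ATerm C) (hsa : ApplicativeT s)
    (hst : Rew R s t)
    (hs : NormTo (USys aa) s s') (ht : NormTo (USys aa) t t') :
    Relation.TransGen (Rew (UD aa R)) s' t' :=
  uncurried_step_general R aa hR hl s t s' t' hst hs ht
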